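/- arXiv:1111.2774 — 2 statements merged into one kernel-verified Lean document; each statement's English description precedes it below -/
import Mathlib

section
/- If B is a closed disk of radius r in ℂ, then its 1-dimensional Hausdorff content σ(B) equals r. -/
open scoped ENNReal NNReal

noncomputable section

/-- 1-dimensional Hausdorff content: infimum of sums of radii over countable disk covers. -/
def sigmaContent (B : Set ℂ) : ℝ≥0∞ :=
  ⨅ (c : ℕ → ℂ) (r : ℕ → ℝ≥0) (_ : B ⊆ ⋃ i, Metric.closedBall (c i) (r i)),
    ∑' i, (r i : ℝ≥0∞)

/-!
The single disk `closedBall a r` covers itself, so `σ ≤ r`. Conversely, projecting a countable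
cover by disks of radii `ρ i` to the real axis covers the diameter `[a.re - r, a.re + r]` by
intervals of lengths `2 ρ i`, so Lebesgue measure gives `2 r ≤ ∑ 2 ρ i`.
-/

open MeasureTheory Metric

theorem sigmaContent_le_of_subset_closedBall {B : Set ℂ} {c : ℂ} {ρ : ℝ≥0}
    (h : B ⊆ closedBall c ρ) : sigmaContent B ≤ ρ := by
  refine iInf₂_le_of_le (fun _ => c) (Pi.single (M := fun _ => ℝ≥0) 0 ρ) (iInf_le_of_le ?_ ?_)
  · exact h.trans (Set.subset_iUnion_of_subset 0 (by simp))
  · simp [Pi.single_apply, apply_ite]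

theorem Complex.re_image_closedBall (c : ℂ) (ρ : ℝ) :
    Complex.re '' closedBall c ρ = closedBall c.re ρ := by
  refine Set.Subset.antisymm ?_ fun x hx => ⟨⟨x, c.im⟩, ?_, rfl⟩
  · rintro _ ⟨z, hz, rfl⟩
    rw [mem_closedBall, dist_eq_norm] at hz ⊢
    exact (Complex.abs_re_le_norm (z - c)).trans hz
  · rwa [mem_closedBall, Complex.dist_of_im_eq (z := ⟨x, c.im⟩) (w := c) rfl]

theorem volume_re_image_le_two_mul_sigmaContent (B : Set ℂ) :
    volume (Complex.re '' B) ≤ 2 * sigmaContent B := by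
  simp only [sigmaContent, ENNReal.mul_iInf_of_ne two_ne_zero ENNReal.ofNat_ne_top]
  refine le_iInf fun c => le_iInf fun ρ => le_iInf fun hcov => ?_
  have hproj : Complex.re '' B ⊆ ⋃ i, closedBall (c i).re (ρ i) := by
    rw [Set.image_subset_iff, Set.preimage_iUnion]
    refine hcov.trans (Set.iUnion_mono fun i => ?_)
    exact Set.image_subset_iff.1 (Complex.re_image_closedBall (c i) (ρ i)).le
  calc volume (Complex.re '' B)
      ≤ ∑' i, volume (closedBall (c i).re (ρ i)) :=
        (measure_mono hproj).trans (measure_iUnion_le _)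
    _ = 2 * ∑' i, (ρ i : ℝ≥0∞) := by
        simp [Real.volume_closedBall, ENNReal.tsum_mul_left, ENNReal.ofReal_mul]

/-- The 1-dimensional Hausdorff content of a closed disk of radius `r` equals `r`. -/
theorem sigmaContent_closedBall (a : ℂ) (r : ℝ≥0) :
    sigmaContent (Metric.closedBall a r) = r := by
  refine le_antisymm (sigmaContent_le_of_subset_closedBall le_rfl) ?_
  have h : 2 * (r : ℝ≥0∞) ≤ 2 * sigmaContent (closedBall a r) :=
    calc 2 * (r : ℝ≥0∞) = volume (closedBall a.re r) := by
          simp [Real.volume_closedBall, ENNReal.ofReal_mul]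
      _ = volume (Complex.re '' closedBall a r) := by rw [Complex.re_image_closedBall]
      _ ≤ 2 * sigmaContent (closedBall a r) := volume_re_image_le_two_mul_sigmaContent _
  exact (ENNReal.mul_le_mul_iff_right two_ne_zero ENNReal.ofNat_ne_top).1 h
end
end

section
/- If f₁, …, f_d are meromorphic in a domain D and polewise independent with respect to the multi-index m = (m₁, …, m_d) in D, then the system f = (f₁, …, f_d) has at least |m| = m₁ + ⋯ + m_d poles in D, counting multiplicities. -/
open Polynomial Filter Set
open scoped Classical

noncomputable section

/-- The order of `a` as a pole of `f` (0 if `f` is not meromorphic at `a` or has no pole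
there). -/
def poleOrd (f : ℂ → ℂ) (a : ℂ) : ℕ :=
  if h : MeromorphicAt f a then (-((meromorphicOrderAt f a).untopD 0)).toNat else 0

/-- A system `f = (f₁, …, f_d)` of meromorphic functions on `D` is polewise independent with
respect to the multi-index `m` in `D`: no nontrivial combination `Σ pⱼ fⱼ` with `deg pⱼ ≤ mⱼ - 1`
(and `pⱼ = 0` when `mⱼ = 0`) is pole-free in `D`. -/
def PolewiseIndep {d : ℕ} (f : Fin d → ℂ → ℂ) (m : Fin d → ℕ) (D : Set ℂ) : Prop :=
  ¬ ∃ p : Fin d → Polynomial ℂ, (∃ j, p j ≠ 0) ∧ (∀ j, (p j).degree < (m j : ℕ)) ∧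
      ∀ a ∈ D, poleOrd (fun z => ∑ j, (p j).eval z * f j z) a = 0

/-!
Let `V = ∏ⱼ ℂ[X]_{<mⱼ}`, a space of dimension `|m|`, and send `p ∈ V` to the meromorphic
function `Σⱼ pⱼ fⱼ`. At a pole `a` of order `τ(a)` of the system, every such combination has
order `≥ -τ(a)`, and for each `s` the combinations of order `≥ s + 1` have codimension at most one
among those of order `≥ s`: they form the kernel of the coefficient of `(z - a) ^ s`. So making
the combinations pole-free at `a` costs at most `τ(a)` dimensions. If the poles in `D` were
finitely many of total order `< |m|`, a nonzero `p` would survive, contradicting polewise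
independence; if they are infinitely many, any `|m|` of them already suffice.
-/

open scoped Topology
open Module

section OrderFiltration

variable {𝕜 : Type*} [NontriviallyNormedField 𝕜]

def meromorphicOrderGE (a : 𝕜) (s : ℤ) : Submodule 𝕜 (𝕜 → 𝕜) where
  carrier := {h | MeromorphicAt h a ∧ (s : WithTop ℤ) ≤ meromorphicOrderAt h a}
  zero_mem' := ⟨MeromorphicAt.const 0 a, by simp⟩
  add_mem' {_ _} h₁_mem h₂_mem :=
    ⟨h₁_mem.1.add h₂_mem.1,
      (le_min h₁_mem.2 h₂_mem.2).trans (meromorphicOrderAt_add h₁_mem.1 h₂_mem.1)⟩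
  smul_mem' c h h_mem := by
    refine ⟨h_mem.1.const_smul c, ?_⟩
    rcases eq_or_ne c 0 with rfl | hc
    · simp
    · have h_ord : meromorphicOrderAt (c • h) a = meromorphicOrderAt h a :=
        meromorphicOrderAt_smul_of_ne_zero (g := fun _ => c) analyticAt_const hc
      exact h_ord ▸ h_mem.2

variable {a : 𝕜} {s t : ℤ} {h q : 𝕜 → 𝕜}

lemma mem_meromorphicOrderGE :
    h ∈ meromorphicOrderGE a s ↔ MeromorphicAt h a ∧ (s : WithTop ℤ) ≤ meromorphicOrderAt h a :=
  Iff.rfl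

lemma meromorphicOrderGE_antitone (hst : s ≤ t) :
    meromorphicOrderGE a t ≤ meromorphicOrderGE a s :=
  fun _ h_mem => ⟨h_mem.1, (WithTop.coe_le_coe.2 hst).trans h_mem.2⟩

lemma AnalyticAt.mul_mem_meromorphicOrderGE {φ : 𝕜 → 𝕜} (hφ : AnalyticAt 𝕜 φ a)
    (hh : h ∈ meromorphicOrderGE a s) : φ * h ∈ meromorphicOrderGE a s := by
  refine ⟨hφ.meromorphicAt.mul hh.1, ?_⟩
  rw [meromorphicOrderAt_mul hφ.meromorphicAt hh.1]
  exact le_add_of_nonneg_of_le hφ.meromorphicOrderAt_nonneg hh.2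

lemma meromorphicOrderAt_zpow_sub_mul (hh : MeromorphicAt h a) :
    meromorphicOrderAt (fun z => (z - a) ^ s * h z) a = s + meromorphicOrderAt h a := by
  rw [fun_meromorphicOrderAt_mul (by fun_prop) hh, fun_meromorphicOrderAt_zpow_id_sub_const]

lemma mem_meromorphicOrderGE_iff_exists_tendsto (hh : MeromorphicAt h a) :
    h ∈ meromorphicOrderGE a s ↔
      ∃ L, Tendsto (fun z => (z - a) ^ (-s) * h z) (𝓝[≠] a) (𝓝 L) := by
  rw [tendsto_nhds_iff_meromorphicOrderAt_nonneg (by fun_prop), meromorphicOrderAt_zpow_sub_mul hh,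
    mem_meromorphicOrderGE, and_iff_right hh]
  cases meromorphicOrderAt h a with
  | top => simp
  | coe n => norm_cast; omega

lemma mem_meromorphicOrderGE_add_one_iff_tendsto (hh : MeromorphicAt h a) :
    h ∈ meromorphicOrderGE a (s + 1) ↔
      Tendsto (fun z => (z - a) ^ (-s) * h z) (𝓝[≠] a) (𝓝 0) := by
  rw [tendsto_zero_iff_meromorphicOrderAt_pos (by fun_prop), meromorphicOrderAt_zpow_sub_mul hh,
    mem_meromorphicOrderGE, and_iff_right hh]
  cases meromorphicOrderAt h a with
  | top => simp
  | coe n => norm_cast; omega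

lemma meromorphicOrderGE_le_sup_span_singleton (hq : q ∈ meromorphicOrderGE a s)
    (hq' : q ∉ meromorphicOrderGE a (s + 1)) :
    meromorphicOrderGE a s ≤ meromorphicOrderGE a (s + 1) ⊔ 𝕜 ∙ q := by
  intro h hh
  obtain ⟨Lh, hLh⟩ := (mem_meromorphicOrderGE_iff_exists_tendsto hh.1).1 hh
  obtain ⟨Lq, hLq⟩ := (mem_meromorphicOrderGE_iff_exists_tendsto hq.1).1 hq
  have hLq₀ : Lq ≠ 0 := by
    rintro rfl
    exact hq' ((mem_meromorphicOrderGE_add_one_iff_tendsto hq.1).2 hLq)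
  have h_sub : h - (Lh / Lq) • q ∈ meromorphicOrderGE a (s + 1) := by
    rw [mem_meromorphicOrderGE_add_one_iff_tendsto (hh.1.sub (hq.1.const_smul _))]
    have h_lim := hLh.sub (hLq.const_mul (Lh / Lq))
    rw [div_mul_cancel₀ _ hLq₀, sub_self] at h_lim
    refine h_lim.congr fun z => ?_
    simp only [Pi.sub_apply, Pi.smul_apply, smul_eq_mul]
    ring
  exact Submodule.mem_sup.2
    ⟨_, h_sub, _, Submodule.mem_span_singleton.2 ⟨Lh / Lq, rfl⟩, sub_add_cancel _ _⟩

end OrderFiltration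

section CodimensionCount

variable {K V M : Type*} [Field K] [AddCommGroup V] [Module K V] [FiniteDimensional K V]
  [AddCommGroup M] [Module K M] (Φ : V →ₗ[K] M)

lemma finrank_le_finrank_inf_comap_add_one {N N' : Submodule K M}
    (hN : ∀ q ∈ N, q ∉ N' → N ≤ N' ⊔ K ∙ q) {W : Submodule K V} (hW : W ≤ N.comap Φ) :
    finrank K W ≤ finrank K ↥(W ⊓ N'.comap Φ) + 1 := by
  by_cases hW' : W ≤ N'.comap Φ
  · rw [inf_eq_left.2 hW']
    exact Nat.le_succ _
  obtain ⟨c, hcW, hc⟩ := SetLike.not_le_iff_exists.1 hW'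
  have hc₀ : c ≠ 0 := by
    rintro rfl
    exact hc (N'.comap Φ).zero_mem
  have h_cover : W ≤ (W ⊓ N'.comap Φ) ⊔ K ∙ c := by
    intro x hx
    obtain ⟨y, hy, z, hz, hyz⟩ := Submodule.mem_sup.1 (hN _ (hW hcW) hc (hW hx))
    obtain ⟨r, rfl⟩ := Submodule.mem_span_singleton.1 hz
    refine Submodule.mem_sup.2 ⟨x - r • c, ⟨W.sub_mem hx (W.smul_mem r hcW), ?_⟩, r • c,
      Submodule.mem_span_singleton.2 ⟨r, rfl⟩, sub_add_cancel _ _⟩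
    show Φ (x - r • c) ∈ N'
    rwa [map_sub, map_smul, ← hyz, add_sub_cancel_right]
  calc finrank K W ≤ finrank K ↥((W ⊓ N'.comap Φ) ⊔ K ∙ c) := Submodule.finrank_mono h_cover
    _ ≤ finrank K ↥(W ⊓ N'.comap Φ) + finrank K ↥(K ∙ c) :=
      Submodule.finrank_add_le_finrank_add_finrank _ _
    _ = finrank K ↥(W ⊓ N'.comap Φ) + 1 := by rw [finrank_span_singleton hc₀]

lemma finrank_le_finrank_inf_comap_add (N : ℤ → Submodule K M)
    (hN : ∀ s, ∀ q ∈ N s, q ∉ N (s + 1) → N s ≤ N (s + 1) ⊔ K ∙ q) (n : ℕ) :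
    ∀ {s : ℤ} {W : Submodule K V}, W ≤ (N s).comap Φ →
      finrank K W ≤ finrank K ↥(W ⊓ (N (s + n)).comap Φ) + n := by
  induction n with
  | zero =>
    intro s W hW
    rw [Nat.cast_zero, add_zero, add_zero, inf_eq_left.2 hW]
  | succ n ih =>
    intro s W hW
    have h_step := finrank_le_finrank_inf_comap_add_one Φ (hN s) hW
    have h_rest := ih (s := s + 1) (W := W ⊓ (N (s + 1)).comap Φ) inf_le_right
    have h_mono : finrank K ↥(W ⊓ (N (s + 1)).comap Φ ⊓ (N (s + 1 + n)).comap Φ) ≤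
        finrank K ↥(W ⊓ (N (s + ↑(n + 1))).comap Φ) := by
      refine Submodule.finrank_mono (inf_le_inf_right _ inf_le_left |>.trans_eq ?_)
      rw [Nat.cast_succ, add_comm (n : ℤ), add_assoc]
    omega

lemma finrank_le_finrank_inf_iInf_comap_add {ι : Type*} (N : ι → ℤ → Submodule K M)
    (hN : ∀ i s, ∀ q ∈ N i s, q ∉ N i (s + 1) → N i s ≤ N i (s + 1) ⊔ K ∙ q) (τ : ι → ℕ)
    (P : Finset ι) :
    ∀ {W : Submodule K V}, (∀ i ∈ P, W ≤ (N i (-τ i)).comap Φ) →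
      finrank K W ≤ finrank K ↥(W ⊓ ⨅ i ∈ P, (N i 0).comap Φ) + ∑ i ∈ P, τ i := by
  induction P using Finset.cons_induction with
  | empty =>
    intro W _
    have h_top : ⨅ i ∈ (∅ : Finset ι), (N i 0).comap Φ = ⊤ := by simp
    rw [h_top, inf_top_eq, Finset.sum_empty, add_zero]
  | cons i P hi ih =>
    intro W hW
    have h_step := finrank_le_finrank_inf_comap_add Φ (N i) (hN i) (τ i)
      (hW i (Finset.mem_cons_self i P))
    rw [neg_add_cancel] at h_step
    have h_rest := ih (W := W ⊓ (N i 0).comap Φ)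
      fun j hj => inf_le_left.trans (hW j (Finset.mem_cons_of_mem hj))
    rw [Finset.sum_cons, Finset.cons_eq_insert, Finset.iInf_insert, ← inf_assoc]
    omega

lemma exists_ne_zero_forall_mem_of_sum_lt_finrank {ι : Type*} (N : ι → ℤ → Submodule K M)
    (hN : ∀ i s, ∀ q ∈ N i s, q ∉ N i (s + 1) → N i s ≤ N i (s + 1) ⊔ K ∙ q) (τ : ι → ℕ)
    (P : Finset ι) (hΦ : ∀ i ∈ P, ∀ v, Φ v ∈ N i (-τ i)) (hlt : ∑ i ∈ P, τ i < finrank K V) :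
    ∃ v ≠ 0, ∀ i ∈ P, Φ v ∈ N i 0 := by
  have h_rank := finrank_le_finrank_inf_iInf_comap_add Φ N hN τ P (W := ⊤)
    fun i hi v _ => hΦ i hi v
  rw [finrank_top, top_inf_eq] at h_rank
  have h_ne_bot : ⨅ i ∈ P, (N i 0).comap Φ ≠ ⊥ := by
    intro h_bot
    rw [h_bot, finrank_bot] at h_rank
    omega
  obtain ⟨v, hv, hv₀⟩ := Submodule.exists_mem_ne_zero_of_ne_bot h_ne_bot
  simp only [Submodule.mem_iInf, Submodule.mem_comap] at hv
  exact ⟨v, hv₀, hv⟩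

end CodimensionCount

section PolynomialCombination

variable {𝕜 : Type*} [NontriviallyNormedField 𝕜] {ι : Type*} [Fintype ι]

def polyCombination (f : ι → 𝕜 → 𝕜) (m : ι → ℕ) : (∀ j, degreeLT 𝕜 (m j)) →ₗ[𝕜] 𝕜 → 𝕜 where
  toFun p z := ∑ j, (p j : 𝕜[X]).eval z * f j z
  map_add' p p' := by
    ext z
    simp only [Pi.add_apply, Submodule.coe_add, eval_add, add_mul, Finset.sum_add_distrib]
  map_smul' c p := by
    ext z
    simp only [Pi.smul_apply, Submodule.coe_smul, eval_smul, smul_eq_mul, mul_assoc,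
      Finset.mul_sum, RingHom.id_apply]

lemma polyCombination_mem_meromorphicOrderGE {f : ι → 𝕜 → 𝕜} {m : ι → ℕ} {a : 𝕜} {s : ℤ}
    (hf : ∀ j, f j ∈ meromorphicOrderGE a s) (p : ∀ j, degreeLT 𝕜 (m j)) :
    polyCombination f m p ∈ meromorphicOrderGE a s := by
  have h_sum : polyCombination f m p = ∑ j, (fun z => (p j : 𝕜[X]).eval z) * f j := by
    ext z
    simp [polyCombination, Finset.sum_apply]
  rw [h_sum]
  exact Submodule.sum_mem _ fun j _ =>
    (AnalyticOnNhd.eval_polynomial _ a (Set.mem_univ a)).mul_mem_meromorphicOrderGE (hf j)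

lemma finrank_pi_degreeLT (m : ι → ℕ) : finrank 𝕜 (∀ j, degreeLT 𝕜 (m j)) = ∑ j, m j := by
  simp [Module.finrank_pi_fintype, (degreeLTEquiv 𝕜 _).finrank_eq]

end PolynomialCombination

section PoleOrder

variable {f : ℂ → ℂ} {a : ℂ}

lemma mem_meromorphicOrderGE_neg_poleOrd (hf : MeromorphicAt f a) :
    f ∈ meromorphicOrderGE a (-poleOrd f a) := by
  refine ⟨hf, ?_⟩
  rw [poleOrd, dif_pos hf]
  cases meromorphicOrderAt f a with
  | top => exact le_top
  | coe n => rw [WithTop.untopD_coe]; norm_cast; omega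

lemma poleOrd_eq_zero_of_mem_meromorphicOrderGE (hf : f ∈ meromorphicOrderGE a 0) :
    poleOrd f a = 0 := by
  obtain ⟨hf, h_nonneg⟩ := hf
  rw [poleOrd, dif_pos hf]
  cases h_ord : meromorphicOrderAt f a with
  | top => rfl
  | coe n =>
    rw [h_ord] at h_nonneg
    rw [WithTop.untopD_coe, Int.toNat_eq_zero, neg_nonpos]
    exact WithTop.coe_le_coe.1 h_nonneg

lemma mem_meromorphicOrderGE_neg_sup_poleOrd {ι : Type*} [Fintype ι] {f : ι → ℂ → ℂ}
    (hf : ∀ j, MeromorphicAt (f j) a) (j : ι) :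
    f j ∈ meromorphicOrderGE a (-(Finset.univ.sup fun j => poleOrd (f j) a : ℕ)) :=
  meromorphicOrderGE_antitone (neg_le_neg (Nat.cast_le.2
    (Finset.le_sup (f := fun j => poleOrd (f j) a) (Finset.mem_univ j))))
    (mem_meromorphicOrderGE_neg_poleOrd (hf j))

end PoleOrder

theorem polewise_indep_num_poles_general (d : ℕ) (f : Fin d → ℂ → ℂ) (m : Fin d → ℕ)
    (D : Set ℂ) (hf : ∀ j, MeromorphicOn (f j) D) (hind : PolewiseIndep f m D) :
    ∃ S : Finset ℂ, ↑S ⊆ D ∧ (∀ a ∈ S, 0 < Finset.univ.sup fun j => poleOrd (f j) a) ∧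
      (∑ j, m j) ≤ ∑ a ∈ S, Finset.univ.sup fun j => poleOrd (f j) a := by
  set τ : ℂ → ℕ := fun a => Finset.univ.sup fun j => poleOrd (f j) a
  have hτ : ∀ a ∈ D, ∀ p, polyCombination f m p ∈ meromorphicOrderGE a (-τ a) :=
    fun a ha => polyCombination_mem_meromorphicOrderGE
      (mem_meromorphicOrderGE_neg_sup_poleOrd fun j => hf j a ha)
  by_cases hP : {a ∈ D | 0 < τ a}.Finite
  · refine ⟨hP.toFinset, fun a ha => (hP.mem_toFinset.1 ha).1,
      fun a ha => (hP.mem_toFinset.1 ha).2, ?_⟩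
    by_contra! hlt
    rw [← finrank_pi_degreeLT (𝕜 := ℂ)] at hlt
    obtain ⟨p, hp₀, hp⟩ := exists_ne_zero_forall_mem_of_sum_lt_finrank (polyCombination f m)
      meromorphicOrderGE (fun _ _ _ => meromorphicOrderGE_le_sup_span_singleton) τ
      hP.toFinset (fun a ha => hτ a (hP.mem_toFinset.1 ha).1) hlt
    refine hind ⟨fun j => p j, ?_, fun j => mem_degreeLT.1 (p j).2, fun a ha => ?_⟩
    · contrapose! hp₀
      exact funext fun j => Subtype.ext (hp₀ j)
    · apply poleOrd_eq_zero_of_mem_meromorphicOrderGE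
      show polyCombination f m p ∈ meromorphicOrderGE a 0
      by_cases haP : 0 < τ a
      · exact hp a (hP.mem_toFinset.2 ⟨ha, haP⟩)
      · simpa [show τ a = 0 by omega] using hτ a ha p
  · obtain ⟨S, hSP, hcard⟩ := Set.Infinite.exists_subset_card_eq hP (∑ j, m j)
    refine ⟨S, fun a ha => (hSP ha).1, fun a ha => (hSP ha).2, ?_⟩
    calc ∑ j, m j = ∑ _a ∈ S, 1 := by simp [hcard]
      _ ≤ ∑ a ∈ S, τ a := Finset.sum_le_sum fun a ha => (hSP ha).2

/-- If `f₁, …, f_d` are meromorphic in a domain `D` and polewise independent with respect to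
`m` in `D`, then the system has at least `|m|` poles in `D`, counting multiplicities. -/
theorem polewise_indep_num_poles (d : ℕ) (f : Fin d → ℂ → ℂ) (m : Fin d → ℕ)
    (hm : m ≠ 0) (D : Set ℂ) (hD : IsOpen D) (hDc : IsConnected D)
    (hf : ∀ j, MeromorphicOn (f j) D) (hind : PolewiseIndep f m D) :
    ∃ S : Finset ℂ, ↑S ⊆ D ∧ (∀ a ∈ S, 0 < Finset.univ.sup fun j => poleOrd (f j) a) ∧
      (∑ j, m j) ≤ ∑ a ∈ S, Finset.univ.sup fun j => poleOrd (f j) a :=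
  polewise_indep_num_poles_general d f m D hf hind
end
end
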